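/- Let G be a finite simple graph and xy an edge of G. Let G' be the graph obtained from G by deleting the edge xy (keeping all vertices). Then for every integer s ≥ 1, as ideals of the polynomial ring, I(G)^{(s)} + (xy) = I(G')^{(s)} + (xy). -/

import Mathlib

open MvPolynomial

/-! ### Symbolic powers -/

/-- The `s`-th symbolic power of an ideal `I`:
`I^{(s)} = ⋂_{p ∈ Min(I)} Ker(R → (R/I^s)_p)`. -/
noncomputable def symbolicPower {R : Type} [CommRing R] (I : Ideal R) (s : ℕ) : Ideal R :=
  ⨅ p : {p : Ideal R // p ∈ I.minimalPrimes},
    haveI : p.1.IsPrime := p.2.1.1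
    RingHom.ker ((algebraMap (R ⧸ I ^ s)
        (Localization (Submonoid.map (Ideal.Quotient.mk (I ^ s)) p.1.primeCompl))).comp
      (Ideal.Quotient.mk (I ^ s)))

/-! ### Edge ideals and graph notions -/

/-- The edge ideal of a graph on vertex set `Fin n`, inside `K[x_1, …, x_n]`. -/
noncomputable def edgeIdeal (K : Type) [Field K] {n : ℕ} (G : SimpleGraph (Fin n)) :
    Ideal (MvPolynomial (Fin n) K) :=
  Ideal.span {m | ∃ i j : Fin n, G.Adj i j ∧ m = X i * X j}

/-- The edge sets of cycles of `G`. -/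
def cycleEdgeSets {V : Type} (G : SimpleGraph V) : Set (Set (Sym2 V)) :=
  {E' | ∃ (v : V) (w : G.Walk v v), w.IsCycle ∧ E' = {e | e ∈ w.edges}}

/-- A graph is unicyclic if it contains exactly one cycle as a subgraph. -/
def IsUnicyclic {V : Type} (G : SimpleGraph V) : Prop :=
  ∃! E', E' ∈ cycleEdgeSets G

/-- The graph `G \ U`: delete the vertices of `U` and all edges meeting `U`. -/
def deleteVertices {V : Type} (G : SimpleGraph V) (U : Set V) : SimpleGraph V where
  Adj a b := G.Adj a b ∧ a ∉ U ∧ b ∉ U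
  symm := ⟨fun _ _ ⟨h, ha, hb⟩ => ⟨h.symm, hb, ha⟩⟩
  loopless := ⟨fun a ⟨h, _, _⟩ => G.loopless.irrefl a h⟩

/-- The distance `d_G(x, W)` from a vertex to a set of vertices. -/
noncomputable def distToSet {V : Type} (G : SimpleGraph V) (x : V) (W : Set V) : ℕ :=
  sInf (G.dist x '' W)

/-- `x` is a leaf of `G`, i.e. a vertex of degree one. -/
def IsLeaf {V : Type} (G : SimpleGraph V) (x : V) : Prop :=
  ∃ y, G.neighborSet x = {y}

/-- `M` is an induced matching of `G`: a set of pairwise disjoint edges such that no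
edge of `E(G) \ M` is contained in the union of two edges of `M`. -/
def IsInducedMatching {V : Type} (G : SimpleGraph V) (M : Set (Sym2 V)) : Prop :=
  M ⊆ G.edgeSet ∧
  (∀ e ∈ M, ∀ f ∈ M, e ≠ f → ∀ v : V, ¬(v ∈ e ∧ v ∈ f)) ∧
  (∀ g ∈ G.edgeSet, g ∉ M → ∀ e ∈ M, ∀ f ∈ M, ¬(∀ v : V, v ∈ g → v ∈ e ∨ v ∈ f))

/-- The induced matching number `ν(G)`. -/
noncomputable def inducedMatchingNumber {V : Type} (G : SimpleGraph V) : ℕ :=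
  sSup {k : ℕ | ∃ M : Set (Sym2 V), IsInducedMatching G M ∧ M.ncard = k}

/-- `A` is a vertex cover of `G`. -/
def IsVertexCover {V : Type} (G : SimpleGraph V) (A : Set V) : Prop :=
  ∀ ⦃u v : V⦄, G.Adj u v → u ∈ A ∨ v ∈ A

/-- `A` is a minimal vertex cover of `G`. -/
def IsMinimalVertexCover {V : Type} (G : SimpleGraph V) (A : Set V) : Prop :=
  IsVertexCover G A ∧ ∀ B ⊂ A, ¬ IsVertexCover G B

/-! ### Castelnuovo–Mumford regularity -/

/-- An element `f` of a twisted graded free module `⊕_{e : σ} S(-deg e)` over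
`S = K[x_1, …, x_n]` is homogeneous of degree `d` iff each component `f e` is a
homogeneous polynomial of degree `d - deg e`. -/
def IsHomogElem {K : Type} [Field K] {n : ℕ} {σ : Type} (deg : σ → ℕ)
    (f : σ →₀ MvPolynomial (Fin n) K) (d : ℕ) : Prop :=
  ∀ e : σ, if deg e ≤ d then f e ∈ homogeneousSubmodule (Fin n) K (d - deg e) else f e = 0

/-- A graded free resolution of an ideal `I ⊆ S = K[x_1, …, x_n]` by finitely generated
twisted graded free modules `F i = ⊕_{e : σ i} S(-deg i e)`, with degree-preserving
differentials, exact, and with augmentation onto `I`. -/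
structure GradedFreeResolution (K : Type) [Field K] (n : ℕ)
    (I : Ideal (MvPolynomial (Fin n) K)) where
  σ : ℕ → Type
  fin : ∀ i, Fintype (σ i)
  deg : ∀ i, σ i → ℕ
  aug : (σ 0 →₀ MvPolynomial (Fin n) K) →ₗ[MvPolynomial (Fin n) K] MvPolynomial (Fin n) K
  d : ∀ i, (σ (i + 1) →₀ MvPolynomial (Fin n) K) →ₗ[MvPolynomial (Fin n) K]
        (σ i →₀ MvPolynomial (Fin n) K)
  aug_range : LinearMap.range aug = I
  exact_zero : LinearMap.ker aug = LinearMap.range (d 0)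
  exact : ∀ i, LinearMap.ker (d i) = LinearMap.range (d (i + 1))
  aug_graded : ∀ (dd : ℕ) (f : σ 0 →₀ MvPolynomial (Fin n) K),
    IsHomogElem (deg 0) f dd → aug f ∈ homogeneousSubmodule (Fin n) K dd
  d_graded : ∀ (i : ℕ) (dd : ℕ) (f : σ (i + 1) →₀ MvPolynomial (Fin n) K),
    IsHomogElem (deg (i + 1)) f dd → IsHomogElem (deg i) (d i f) dd

/-- The Castelnuovo–Mumford regularity of a homogeneous ideal `I ⊆ K[x_1, …, x_n]`:
the least `r` such that `I` admits a graded free resolution whose `i`-th term is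
generated in degrees `≤ r + i`.  (For finitely generated graded modules this agrees
with the usual definition `max{j - i : β_{i,j} ≠ 0}` via the minimal free resolution.) -/
noncomputable def reg (K : Type) [Field K] (n : ℕ) (I : Ideal (MvPolynomial (Fin n) K)) : ℕ :=
  sInf {r : ℕ | ∃ F : GradedFreeResolution K n I, ∀ (i : ℕ) (e : F.σ i), F.deg i e ≤ r + i}

/-!
The minimal primes of `I(G)` are the ideals `P_A = (x_i : i ∈ A)` of the minimal vertex covers `A`
of `G`. The `s`-th power of `P_A` consists of the polynomials all of whose monomials have degree
`≥ s` in the variables of `A`, i.e. whose power series have `A`-weighted order `≥ s`; additivity of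
the weighted order under multiplication makes `P_A` prime and `P_A ^ s` primary. Hence
`f ∈ I(G)^{(s)}` iff every monomial of `f` has degree `≥ s` in the variables of every vertex cover
of `G`.

Modulo `(xy)` only the monomials of `f` missing `x` or `y` matter. A vertex cover `A` of `G - xy`
extends to the vertex covers `A ∪ {x}` and `A ∪ {y}` of `G`, and a monomial missing `x` (resp. `y`)
has the same degree in the variables of `A` as in those of `A ∪ {x}` (resp. `A ∪ {y}`).
-/

theorem mem_symbolicPower_iff {R : Type} [CommRing R] (I : Ideal R) (s : ℕ) (f : R) :
    f ∈ symbolicPower I s ↔ ∀ p ∈ I.minimalPrimes, ∃ u ∉ p, u * f ∈ I ^ s := by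
  simp only [symbolicPower, Ideal.mem_iInf, Subtype.forall]
  refine forall₂_congr fun p hp => ?_
  have : p.IsPrime := hp.1.1
  rw [RingHom.mem_ker, RingHom.comp_apply,
    IsLocalization.map_eq_zero_iff (Submonoid.map (Ideal.Quotient.mk (I ^ s)) p.primeCompl)]
  simp only [Subtype.exists, Submonoid.mem_map, exists_prop]
  constructor
  · rintro ⟨_, ⟨u, hu, rfl⟩, h⟩
    exact ⟨u, hu, by rwa [← map_mul, Ideal.Quotient.eq_zero_iff_mem] at h⟩
  · rintro ⟨u, hu, h⟩
    exact ⟨_, ⟨u, hu, rfl⟩, by rwa [← map_mul, Ideal.Quotient.eq_zero_iff_mem]⟩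

theorem Finsupp.weight_mono {σ : Type*} (w : σ → ℕ) {d e : σ →₀ ℕ} (h : d ≤ e) :
    Finsupp.weight w d ≤ Finsupp.weight w e := by
  obtain ⟨c, rfl⟩ := le_iff_exists_add.1 h
  simp

namespace MvPolynomial

variable {σ R : Type*} [CommRing R] {A : Set σ} {k : ℕ}

noncomputable abbrev degreeIn (A : Set σ) : (σ →₀ ℕ) →+ ℕ :=
  Finsupp.weight (A.indicator 1)

theorem monomial_mem_span_X_image_pow {d : σ →₀ ℕ} (hd : k ≤ degreeIn A d) :
    monomial d (1 : R) ∈ Ideal.span (X '' A) ^ k := by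
  induction k generalizing d with
  | zero => simp
  | succ k ih =>
    obtain ⟨i, hid, hiA⟩ : ∃ i, d i ≠ 0 ∧ i ∈ A := by
      by_contra! h
      have : degreeIn A d = 0 := by
        rw [Finsupp.weight_apply, Finsupp.sum]
        refine Finset.sum_eq_zero fun i hi => ?_
        simp [Set.indicator_of_notMem (h i (Finsupp.mem_support_iff.1 hi))]
      omega
    have hsplit : degreeIn A (d - Finsupp.single i 1) + 1 = degreeIn A d := by
      simpa [hiA] using Finsupp.weight_sub_single_add (w := A.indicator (1 : σ → ℕ)) hid
    rw [← Finsupp.sub_add_single_one_cancel hid, ← mul_one (1 : R), ← monomial_mul, pow_succ]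
    exact Ideal.mul_mem_mul (ih (by omega)) (Ideal.subset_span ⟨i, hiA, rfl⟩)

theorem span_X_image_pow_le :
    Ideal.span (X '' A) ^ k ≤
      Ideal.span ((monomial · (1 : R)) '' {d | k ≤ degreeIn A d}) := by
  induction k with
  | zero =>
    rw [pow_zero, Ideal.one_eq_top, top_le_iff, Ideal.eq_top_iff_one]
    exact Ideal.subset_span ⟨0, Nat.zero_le _, by simp⟩
  | succ k ih =>
    have hX : Ideal.span (X '' A) ≤
        Ideal.span ((monomial · (1 : R)) '' {d | 1 ≤ degreeIn A d}) := by
      refine Ideal.span_le.2 ?_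
      rintro _ ⟨i, hi, rfl⟩
      exact Ideal.subset_span ⟨Finsupp.single i 1, by simp [Finsupp.weight_single, hi], rfl⟩
    rw [pow_succ]
    refine (Ideal.mul_mono ih hX).trans ?_
    rw [Ideal.span_mul_span', Ideal.span_le]
    rintro _ ⟨_, ⟨a, ha, rfl⟩, _, ⟨b, hb, rfl⟩, rfl⟩
    refine Ideal.subset_span ⟨a + b, ?_, by simp⟩
    simp only [Set.mem_ofPred_eq, map_add] at ha hb ⊢
    omega

theorem mem_span_X_image_pow_iff {f : MvPolynomial σ R} :
    f ∈ Ideal.span (X '' A) ^ k ↔ ∀ d ∈ f.support, k ≤ degreeIn A d := by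
  refine ⟨fun hf => ?_, fun hf => ?_⟩
  · intro d hd
    obtain ⟨e, he, hed⟩ := mem_ideal_span_monomial_image.1 (span_X_image_pow_le hf) d hd
    exact he.trans (Finsupp.weight_mono _ hed)
  · rw [← support_sum_monomial_coeff f]
    refine Ideal.sum_mem _ fun d hd => ?_
    rw [← mul_one (coeff d f), ← C_mul_monomial]
    exact Ideal.mul_mem_left _ _ (monomial_mem_span_X_image_pow (hf d hd))

theorem mem_span_X_image_pow_iff_le_weightedOrder {f : MvPolynomial σ R} :
    f ∈ Ideal.span (X '' A) ^ k ↔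
      (k : ℕ∞) ≤ (f : MvPowerSeries σ R).weightedOrder (A.indicator 1) := by
  rw [mem_span_X_image_pow_iff]
  refine ⟨fun hf => MvPowerSeries.nat_le_weightedOrder _ fun d hd => ?_, fun hf d hd => ?_⟩
  · rw [coeff_coe, ← notMem_support_iff]
    exact fun hmem => (hf d hmem).not_gt hd
  · by_contra! hlt
    refine mem_support_iff.1 hd ?_
    rw [← coeff_coe]
    exact MvPowerSeries.coeff_eq_zero_of_lt_weightedOrder _ (hf.trans_lt' (by exact_mod_cast hlt))

theorem X_mem_span_X_image_iff [Nontrivial R] {i : σ} :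
    (X i : MvPolynomial σ R) ∈ Ideal.span (X '' A) ↔ i ∈ A := by
  classical
  simp [mem_ideal_span_X_image, support_X, Finsupp.single_apply]

theorem weightedOrder_eq_zero_of_notMem_span_X_image {u : MvPolynomial σ R}
    (hu : u ∉ Ideal.span (X '' A)) :
    (u : MvPowerSeries σ R).weightedOrder (A.indicator 1) = 0 := by
  rw [← pow_one (Ideal.span (X '' A)), mem_span_X_image_pow_iff_le_weightedOrder] at hu
  exact Order.lt_one_iff.1 (not_le.1 (by exact_mod_cast hu))

theorem degreeIn_insert_of_eq_zero {A : Set σ} {x : σ} {d : σ →₀ ℕ} (hx : d x = 0) :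
    degreeIn (insert x A) d = degreeIn A d := by
  simp only [Finsupp.weight_apply, Finsupp.sum]
  refine Finset.sum_congr rfl fun i hi => ?_
  have hix : i ≠ x := fun h => Finsupp.mem_support_iff.1 hi (h ▸ hx)
  by_cases hiA : i ∈ A <;> simp [Set.indicator, hiA, hix]

theorem restrictSupport_union (s t : Set (σ →₀ ℕ)) :
    restrictSupport R (s ∪ t) = restrictSupport R s ⊔ restrictSupport R t := by
  simp only [restrictSupport_eq_span, Set.image_union, Submodule.span_union]

theorem mem_span_X_mul_X_of_forall_mem_support {x y : σ} (hxy : x ≠ y) {f : MvPolynomial σ R}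
    (hf : ∀ d ∈ f.support, d x ≠ 0 ∧ d y ≠ 0) : f ∈ Ideal.span {X x * X y} := by
  classical
  have hXY : (X x * X y : MvPolynomial σ R) =
      monomial (Finsupp.single x 1 + Finsupp.single y 1) 1 := by
    simp [X, monomial_mul]
  rw [hXY, ← Set.image_singleton (f := (monomial · (1 : R))), mem_ideal_span_monomial_image]
  refine fun d hd => ⟨_, rfl, fun i => ?_⟩
  obtain ⟨hdx, hdy⟩ := hf d hd
  by_cases hix : i = x <;> by_cases hiy : i = y <;>
    simp [hix, hiy, hxy, Ne.symm hxy] <;> omega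

variable [IsDomain R]

theorem isPrime_span_X_image : (Ideal.span (X '' A) : Ideal (MvPolynomial σ R)).IsPrime := by
  refine ⟨fun htop => ?_, fun {f g} hfg => ?_⟩
  · have := (Ideal.eq_top_iff_one _).1 htop
    rw [← pow_one (Ideal.span (X '' A)), mem_span_X_image_pow_iff_le_weightedOrder, coe_one,
      MvPowerSeries.weightedOrder_one] at this
    exact absurd this (by norm_num)
  · by_contra! h
    rw [← pow_one (Ideal.span (X '' A)), mem_span_X_image_pow_iff_le_weightedOrder, coe_mul,
      MvPowerSeries.weightedOrder_mul, weightedOrder_eq_zero_of_notMem_span_X_image h.1,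
      weightedOrder_eq_zero_of_notMem_span_X_image h.2] at hfg
    exact absurd hfg (by norm_num)

theorem mem_span_X_image_pow_of_mul_mem {u f : MvPolynomial σ R}
    (hu : u ∉ Ideal.span (X '' A)) (huf : u * f ∈ Ideal.span (X '' A) ^ k) :
    f ∈ Ideal.span (X '' A) ^ k := by
  rwa [mem_span_X_image_pow_iff_le_weightedOrder, coe_mul, MvPowerSeries.weightedOrder_mul,
    weightedOrder_eq_zero_of_notMem_span_X_image hu, zero_add,
    ← mem_span_X_image_pow_iff_le_weightedOrder] at huf

end MvPolynomial

theorem Ideal.pow_mul_mem_pow_of_span_singleton_mul_le {R : Type*} [CommSemiring R]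
    {I J : Ideal R} {u f : R} {k : ℕ} (hu : Ideal.span {u} * J ≤ I) (hf : f ∈ J ^ k) :
    u ^ k * f ∈ I ^ k := by
  have := Ideal.pow_right_mono hu k
  rw [mul_pow, Ideal.span_singleton_pow] at this
  exact this (Ideal.mul_mem_mul (Ideal.mem_span_singleton_self _) hf)

section VertexCover

variable {V : Type} {G G' : SimpleGraph V} {A : Set V}

theorem IsVertexCover.anti (h : G' ≤ G) (hA : IsVertexCover G A) : IsVertexCover G' A :=
  fun _ _ huv => hA (h huv)

theorem IsVertexCover.insert_of_deleteEdges {x y : V}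
    (hA : IsVertexCover (G.deleteEdges {s(x, y)}) A) : IsVertexCover G (insert x A) := by
  intro u v huv
  by_cases he : s(u, v) = s(x, y)
  · rcases Sym2.eq_iff.1 he with ⟨rfl, -⟩ | ⟨-, rfl⟩
    · exact Or.inl (Set.mem_insert u A)
    · exact Or.inr (Set.mem_insert v A)
  · exact (hA (SimpleGraph.deleteEdges_adj.2 ⟨huv, he⟩)).imp (Set.mem_insert_of_mem x)
      (Set.mem_insert_of_mem x)

theorem IsMinimalVertexCover.exists_adj_notMem (hA : IsMinimalVertexCover G A) {i : V}
    (hi : i ∈ A) : ∃ j, G.Adj i j ∧ j ∉ A := by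
  by_contra! h
  refine hA.2 (A \ {i}) (Set.sdiff_singleton_ssubset.2 hi) fun u v huv => ?_
  by_cases hu : u = i
  · subst hu
    exact Or.inr ⟨h v huv, fun hv => huv.ne hv.symm⟩
  by_cases hv : v = i
  · subst hv
    exact Or.inl ⟨h u huv.symm, hu⟩
  exact (hA.1 huv).imp (fun h => ⟨h, hu⟩) fun h => ⟨h, hv⟩

end VertexCover

section EdgeIdeal

variable {K : Type} [Field K] {n : ℕ} {G G' : SimpleGraph (Fin n)} {A : Set (Fin n)} {k : ℕ}

theorem IsVertexCover.edgeIdeal_le (hA : IsVertexCover G A) :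
    edgeIdeal K G ≤ Ideal.span (X '' A) := by
  refine Ideal.span_le.2 ?_
  rintro _ ⟨i, j, hij, rfl⟩
  rcases hA hij with hi | hj
  · exact Ideal.mul_mem_right _ _ (Ideal.subset_span ⟨i, hi, rfl⟩)
  · exact Ideal.mul_mem_left _ _ (Ideal.subset_span ⟨j, hj, rfl⟩)

theorem exists_isMinimalVertexCover_of_mem_minimalPrimes {p : Ideal (MvPolynomial (Fin n) K)}
    (hp : p ∈ (edgeIdeal K G).minimalPrimes) :
    ∃ A, IsMinimalVertexCover G A ∧ p = Ideal.span (X '' A) := by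
  have hprime : p.IsPrime := hp.1.1
  set A := {i | (X i : MvPolynomial (Fin n) K) ∈ p}
  have hA : IsVertexCover G A := fun i j hij =>
    hprime.mem_or_mem (hp.1.2 (Ideal.subset_span ⟨i, j, hij, rfl⟩))
  have hAp : Ideal.span (X '' A) ≤ p := Ideal.span_le.2 (Set.image_subset_iff.2 fun _ h => h)
  have hp_eq : p = Ideal.span (X '' A) :=
    le_antisymm (hp.2 ⟨isPrime_span_X_image, hA.edgeIdeal_le⟩ hAp) hAp
  refine ⟨A, ⟨hA, fun B hBA hB => ?_⟩, hp_eq⟩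
  obtain ⟨i, hiA, hiB⟩ := Set.exists_of_ssubset hBA
  have hBp : Ideal.span (X '' B) ≤ p := (Ideal.span_mono (Set.image_mono hBA.subset)).trans hAp
  have := hp.2 ⟨isPrime_span_X_image, hB.edgeIdeal_le⟩ hBp
  exact hiB (X_mem_span_X_image_iff.1 (this hiA))

-- The multiplier `u` is the product of one outside neighbour of each vertex of `A`.
theorem IsMinimalVertexCover.exists_span_singleton_mul_le (hA : IsMinimalVertexCover G A) :
    ∃ u ∉ Ideal.span (X '' A),
      Ideal.span {u} * Ideal.span (X '' A) ≤ edgeIdeal K G := by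
  classical
  choose j hj using fun i : A => hA.exists_adj_notMem i.2
  have : (Ideal.span (X '' A) : Ideal (MvPolynomial (Fin n) K)).IsPrime := isPrime_span_X_image
  refine ⟨∏ i : A, X (j i), fun hmem => ?_, ?_⟩
  · obtain ⟨i, -, hi⟩ := Ideal.IsPrime.prod_mem_iff.1 hmem
    exact (hj i).2 (X_mem_span_X_image_iff.1 hi)
  · rw [Ideal.span_mul_span', Ideal.span_le]
    rintro _ ⟨_, rfl, _, ⟨i, hi, rfl⟩, rfl⟩
    have hdvd : X (j ⟨i, hi⟩) * X i ∣ (∏ i : A, X (j i)) * (X i : MvPolynomial (Fin n) K) :=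
      mul_dvd_mul_right (Finset.dvd_prod_of_mem (fun i : A => X (j i)) (Finset.mem_univ _)) _
    exact Ideal.mem_of_dvd _ hdvd (Ideal.subset_span ⟨_, _, (hj ⟨i, hi⟩).1.symm, rfl⟩)

theorem mem_symbolicPower_edgeIdeal_iff {f : MvPolynomial (Fin n) K} :
    f ∈ symbolicPower (edgeIdeal K G) k ↔
      ∀ A, IsVertexCover G A → f ∈ Ideal.span (X '' A) ^ k := by
  rw [mem_symbolicPower_iff]
  constructor
  · intro hf A hA
    have : (Ideal.span (X '' A) : Ideal (MvPolynomial (Fin n) K)).IsPrime := isPrime_span_X_image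
    obtain ⟨p, hp, hpA⟩ := Ideal.exists_minimalPrimes_le (hA.edgeIdeal_le (K := K))
    obtain ⟨u, hu, huf⟩ := hf p hp
    obtain ⟨B, hB, rfl⟩ := exists_isMinimalVertexCover_of_mem_minimalPrimes hp
    refine Ideal.pow_right_mono hpA k (mem_span_X_image_pow_of_mul_mem hu ?_)
    exact Ideal.pow_right_mono hB.1.edgeIdeal_le k huf
  · intro hf p hp
    obtain ⟨A, hA, rfl⟩ := exists_isMinimalVertexCover_of_mem_minimalPrimes hp
    obtain ⟨u, hu, hle⟩ := hA.exists_span_singleton_mul_le (K := K)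
    exact ⟨u ^ k, fun h => hu (isPrime_span_X_image.mem_of_pow_mem k h),
      Ideal.pow_mul_mem_pow_of_span_singleton_mul_le hle (hf A hA.1)⟩

theorem symbolicPower_edgeIdeal_mono (h : G' ≤ G) :
    symbolicPower (edgeIdeal K G') k ≤ symbolicPower (edgeIdeal K G) k := fun _ hf =>
  mem_symbolicPower_edgeIdeal_iff.2 fun A hA => mem_symbolicPower_edgeIdeal_iff.1 hf A (hA.anti h)

theorem mem_symbolicPower_deleteEdges_of_forall_mem_support {x y : Fin n}
    {f g : MvPolynomial (Fin n) K} (hf : f ∈ symbolicPower (edgeIdeal K G) k)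
    (hg : ∀ d ∈ g.support, d ∈ f.support ∧ (d x = 0 ∨ d y = 0)) :
    g ∈ symbolicPower (edgeIdeal K (G.deleteEdges {s(x, y)})) k := by
  rw [mem_symbolicPower_edgeIdeal_iff] at hf ⊢
  intro A hA
  rw [mem_span_X_image_pow_iff]
  intro d hd
  obtain ⟨hdf, hd0 | hd0⟩ := hg d hd
  · rw [← degreeIn_insert_of_eq_zero hd0]
    exact mem_span_X_image_pow_iff.1 (hf _ hA.insert_of_deleteEdges) d hdf
  · rw [Sym2.eq_swap] at hA
    rw [← degreeIn_insert_of_eq_zero hd0]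
    exact mem_span_X_image_pow_iff.1 (hf _ hA.insert_of_deleteEdges) d hdf

theorem symbolicPower_edgeIdeal_le_deleteEdges_sup {x y : Fin n} (hxy : x ≠ y) :
    symbolicPower (edgeIdeal K G) k ≤ symbolicPower (edgeIdeal K (G.deleteEdges {s(x, y)})) k ⊔
      Ideal.span {(X x * X y : MvPolynomial (Fin n) K)} := by
  intro f hf
  have hsupp : f ∈ restrictSupport K
      ({d | d ∈ f.support ∧ (d x = 0 ∨ d y = 0)} ∪ {d | d x ≠ 0 ∧ d y ≠ 0}) := by
    intro d hd
    exact (em (d x = 0 ∨ d y = 0)).imp (⟨hd, ·⟩) not_or.1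
  rw [restrictSupport_union] at hsupp
  obtain ⟨g, hg, h, hh, rfl⟩ := Submodule.mem_sup.1 hsupp
  exact Submodule.add_mem_sup (mem_symbolicPower_deleteEdges_of_forall_mem_support hf hg)
    (mem_span_X_mul_X_of_forall_mem_support hxy hh)

end EdgeIdeal

theorem symbolicPower_add_span_deleteEdge_general
    {K : Type} [Field K] {n : ℕ} (G : SimpleGraph (Fin n)) (x y : Fin n)
    (hxy : G.Adj x y) (s : ℕ) :
    symbolicPower (edgeIdeal K G) s +
        Ideal.span {(X x * X y : MvPolynomial (Fin n) K)} =
      symbolicPower (edgeIdeal K (G.deleteEdges {s(x, y)})) s +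
        Ideal.span {(X x * X y : MvPolynomial (Fin n) K)} := by
  refine le_antisymm (sup_le (symbolicPower_edgeIdeal_le_deleteEdges_sup hxy.ne) le_sup_right) ?_
  exact sup_le_sup_right (symbolicPower_edgeIdeal_mono (G.deleteEdges_le _)) _

/-- Let `xy` be an edge of `G` and `G'` be the graph obtained from `G`
by deleting the edge `xy`.  Then for every `s ≥ 1`,
`I(G)^{(s)} + (xy) = I(G')^{(s)} + (xy)`. -/
theorem symbolicPower_add_span_deleteEdge
    {K : Type} [Field K] {n : ℕ} (G : SimpleGraph (Fin n)) (x y : Fin n)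
    (hxy : G.Adj x y) (s : ℕ) (hs : 1 ≤ s) :
    symbolicPower (edgeIdeal K G) s +
        Ideal.span {(X x * X y : MvPolynomial (Fin n) K)} =
      symbolicPower (edgeIdeal K (G.deleteEdges {s(x, y)})) s +
        Ideal.span {(X x * X y : MvPolynomial (Fin n) K)} :=
  symbolicPower_add_span_deleteEdge_general G x y hxy s
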